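/- arXiv:2301.04252 — 16 statements merged into one kernel-verified Lean document; each statement's English description precedes it below -/
import Mathlib

section
/- Let S be a semigroup, a, b ∈ S, and g, h ∈ S¹ (S with an identity adjoined if necessary). If the three equations ag = gb, hag = b, and gbh = a all hold, then also bh = ha, hg·b = b, gh·a = a, b·hg = b, and a·gh = a. -/
/-- If ag = gb, hag = b, gbh = a (with a,b ∈ S, g,h ∈ S¹), then
bh = ha, hg·b = b, gh·a = a, b·hg = b, a·gh = a. -/
theorem natConj_alternatives {S : Type*} [Semigroup S] (a b : S) (g h : WithOne S)
    (h1 : (a : WithOne S) * g = g * (b : WithOne S))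
    (h3 : h * (a : WithOne S) * g = (b : WithOne S))
    (h4 : g * (b : WithOne S) * h = (a : WithOne S)) :
    (b : WithOne S) * h = h * (a : WithOne S) ∧
    h * g * (b : WithOne S) = (b : WithOne S) ∧
    g * h * (a : WithOne S) = (a : WithOne S) ∧
    (b : WithOne S) * (h * g) = (b : WithOne S) ∧
    (a : WithOne S) * (g * h) = (a : WithOne S) := by
  have h2 : (b : WithOne S) * h = h * (a : WithOne S) := by
    calc (b : WithOne S) * h = h * a * g * h := by rw [h3]
    _ = h * (a * g) * h := by simp [mul_assoc]
    _ = h * (g * b) * h := by rw [h1]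
    _ = h * (g * b * h) := by simp [mul_assoc]
    _ = h * a := by rw [h4]
  refine ⟨h2, ?_, ?_, ?_, ?_⟩
  · calc h * g * (b : WithOne S) = h * (g * b) := by rw [mul_assoc]
    _ = h * (a * g) := by rw [h1]
    _ = h * a * g := by rw [mul_assoc]
    _ = b := h3
  · calc g * h * (a : WithOne S) = g * (h * a) := by rw [mul_assoc]
    _ = g * (b * h) := by rw [h2]
    _ = g * b * h := by rw [mul_assoc]
    _ = a := h4
  · calc (b : WithOne S) * (h * g) = b * h * g := by rw [mul_assoc]
    _ = h * a * g := by rw [h2]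
    _ = b := h3
  · calc (a : WithOne S) * (g * h) = a * g * h := by rw [mul_assoc]
    _ = g * b * h := by rw [h1]
    _ = a := h4
end

section
/- The natural conjugacy relation ∼ₙ on any semigroup S is an equivalence relation. -/
/-- The natural conjugacy relation on a semigroup `S`:
`a ∼ₙ b` iff there exist `g, h ∈ S¹` with `ag = gb`, `bh = ha`, `hag = b`, `gbh = a`. -/
def NatConj {S : Type*} [Semigroup S] (a b : S) : Prop :=
  ∃ g h : WithOne S,
    (a : WithOne S) * g = g * (b : WithOne S) ∧
    (b : WithOne S) * h = h * (a : WithOne S) ∧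
    h * (a : WithOne S) * g = (b : WithOne S) ∧
    g * (b : WithOne S) * h = (a : WithOne S)

/-- The natural conjugacy relation ∼ₙ on any semigroup is an equivalence relation. -/
theorem natConj_equivalence (S : Type*) [Semigroup S] :
    Equivalence (fun a b : S => NatConj a b) := by
  constructor
  · intro a
    exact ⟨1, 1, by simp⟩
  · rintro a b ⟨g, h, h1, h2, h3, h4⟩
    exact ⟨h, g, h2, h1, h4, h3⟩
  · rintro a b c ⟨g, h, h1, h2, h3, h4⟩ ⟨g', h', h1', h2', h3', h4'⟩
    refine ⟨g * g', h' * h, ?_, ?_, ?_, ?_⟩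
    · rw [← mul_assoc, h1, mul_assoc, h1', ← mul_assoc]
    · rw [← mul_assoc, h2', mul_assoc, h2, ← mul_assoc]
    · calc h' * h * (a : WithOne S) * (g * g')
          = h' * (h * (a : WithOne S) * g) * g' := by
            simp only [mul_assoc]
        _ = h' * (b : WithOne S) * g' := by rw [h3]
        _ = (c : WithOne S) := h3'
    · calc g * g' * (c : WithOne S) * (h' * h)
          = g * (g' * (c : WithOne S) * h') * h := by
            simp only [mul_assoc]
        _ = g * (b : WithOne S) * h := by rw [h4']
        _ = (a : WithOne S) := h4
end

section
/- In any semigroup S, the natural conjugacy relation ∼ₙ is contained in Green's relation D: if a ∼ₙ b then a D b. -/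
/-- Green's L relation: `S¹a = S¹b`. -/
def GreenL {S : Type*} [Semigroup S] (a b : S) : Prop :=
  (∃ x : WithOne S, x * (b : WithOne S) = (a : WithOne S)) ∧
  (∃ y : WithOne S, y * (a : WithOne S) = (b : WithOne S))

/-- Green's R relation: `aS¹ = bS¹`. -/
def GreenR {S : Type*} [Semigroup S] (a b : S) : Prop :=
  (∃ x : WithOne S, (b : WithOne S) * x = (a : WithOne S)) ∧
  (∃ y : WithOne S, (a : WithOne S) * y = (b : WithOne S))

/-- Green's D relation, as the composition R ∘ L. -/
def GreenD {S : Type*} [Semigroup S] (a b : S) : Prop :=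
  ∃ c : S, GreenR a c ∧ GreenL c b

/-!
If `a ∼ₙ b` is witnessed by `g, h ∈ S¹`, then `c := ag = gb` sits between `a` and `b`:
`a = gbh = agh` gives `a R c`, and `b = hag = hgb` gives `c L b`.
-/

section Green

variable {S : Type*} [Semigroup S]

theorem greenR_refl (a : S) : GreenR a a :=
  ⟨⟨1, mul_one _⟩, ⟨1, mul_one _⟩⟩

theorem greenL_refl (a : S) : GreenL a a :=
  ⟨⟨1, one_mul _⟩, ⟨1, one_mul _⟩⟩

theorem greenD_refl (a : S) : GreenD a a :=
  ⟨a, greenR_refl a, greenL_refl a⟩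

theorem greenR_mul_right_of_mul_mul_eq {a x : S} {y : WithOne S}
    (h : (a : WithOne S) * x * y = a) : GreenR a (a * x) :=
  ⟨⟨y, by rwa [WithOne.coe_mul]⟩, ⟨x, (WithOne.coe_mul a x).symm⟩⟩

theorem greenL_mul_left_of_mul_mul_eq {b x : S} {y : WithOne S}
    (h : y * x * (b : WithOne S) = b) : GreenL (x * b) b :=
  ⟨⟨x, (WithOne.coe_mul x b).symm⟩, ⟨y, by rwa [WithOne.coe_mul, ← mul_assoc]⟩⟩

end Green

/-- In any semigroup, ∼ₙ ⊆ D. -/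
theorem natConj_subset_greenD {S : Type*} [Semigroup S] (a b : S)
    (h : NatConj a b) : GreenD a b := by
  obtain ⟨g, h, hag, -, hagh, hgbh⟩ := h
  induction g using WithOne.recOneCoe with
  | one =>
    obtain rfl : a = b := WithOne.coe_injective (by simpa using hag)
    exact greenD_refl a
  | coe x =>
    have hxb : a * x = x * b :=
      WithOne.coe_injective (by simpa only [WithOne.coe_mul] using hag)
    refine ⟨a * x, greenR_mul_right_of_mul_mul_eq (y := h) ?_,
      hxb ▸ greenL_mul_left_of_mul_mul_eq (y := h) ?_⟩
    · rwa [hag]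
    · rwa [mul_assoc h, ← hag, ← mul_assoc]
end

section
/- Let S be a semigroup, e an idempotent of S, and a ∈ S. If e ∼ₙ a, then a is also an idempotent. -/
/-- If an idempotent `e` is naturally conjugate to `a`, then `a` is idempotent. -/
theorem natConj_idempotent {S : Type*} [Semigroup S] (e a : S)
    (he : e * e = e) (h : NatConj e a) : a * a = a := by
  obtain ⟨g, h, h1, h2, h3, h4⟩ := h
  have hE : (e : WithOne S) * e = e := by exact_mod_cast congrArg (WithOne.coe) he
  have key : (a : WithOne S) * a = a := by
    calc (a : WithOne S) * a = h * (e : WithOne S) * g * a := by rw [h3]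
    _ = h * (e : WithOne S) * (g * a) := by rw [mul_assoc]
    _ = h * (e : WithOne S) * ((e : WithOne S) * g) := by rw [← h1]
    _ = h * ((e : WithOne S) * (e : WithOne S)) * g := by
        simp only [mul_assoc]
    _ = h * (e : WithOne S) * g := by rw [hE]
    _ = a := h3
  exact_mod_cast key
end

section
/- Let S be a semigroup and let e, f ∈ S be idempotents. Then e ∼ₙ f if and only if e D f (Green's relation D). Moreover, when this holds, there exist mutually inverse conjugators g, h (meaning ghg = g and hgh = h) witnessing the conjugacy. -/
/-- For idempotents `e, f`: `e ∼ₙ f ↔ e D f`, and in that case there are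
mutually inverse conjugators `g, h` witnessing the conjugacy. -/
theorem natConj_iff_greenD_of_idempotents {S : Type*} [Semigroup S] (e f : S)
    (he : e * e = e) (hf : f * f = f) :
    (NatConj e f ↔ GreenD e f) ∧
    (GreenD e f → ∃ g h : WithOne S,
      (e : WithOne S) * g = g * (f : WithOne S) ∧
      (f : WithOne S) * h = h * (e : WithOne S) ∧
      h * (e : WithOne S) * g = (f : WithOne S) ∧
      g * (f : WithOne S) * h = (e : WithOne S) ∧
      g * h * g = g ∧ h * g * h = h) := by
  have he1 : (e : WithOne S) * e = e := by rw [← WithOne.coe_mul, he]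
  have hf1 : (f : WithOne S) * f = f := by rw [← WithOne.coe_mul, hf]
  have main : GreenD e f → ∃ g h : WithOne S,
      (e : WithOne S) * g = g * (f : WithOne S) ∧
      (f : WithOne S) * h = h * (e : WithOne S) ∧
      h * (e : WithOne S) * g = (f : WithOne S) ∧
      g * (f : WithOne S) * h = (e : WithOne S) ∧
      g * h * g = g ∧ h * g * h = h := by
    rintro ⟨c, ⟨⟨x, hx⟩, ⟨y, hy⟩⟩, ⟨⟨z, hz⟩, ⟨w, hw⟩⟩⟩
    have hec : (e : WithOne S) * c = c := by rw [← hy, ← mul_assoc, he1]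
    have hcf : (c : WithOne S) * f = c := by rw [← hz, mul_assoc, hf1]
    have hkey : (f : WithOne S) * x * c = f := by
      conv_lhs => rw [← hw]
      rw [mul_assoc w, hx, mul_assoc, hec, hw]
    have hFh : (f : WithOne S) * ((f : WithOne S) * x * e) = (f : WithOne S) * x * e := by
      rw [← mul_assoc, ← mul_assoc, hf1]
    have hhE : ((f : WithOne S) * x * e) * e = (f : WithOne S) * x * e := by
      rw [mul_assoc, he1]
    have h6 : ((f : WithOne S) * x * e) * c = f := by
      rw [mul_assoc, hec, hkey]
    refine ⟨(c : WithOne S), (f : WithOne S) * x * e, ?_, ?_, ?_, ?_, ?_, ?_⟩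
    · rw [hec, hcf]
    · rw [hFh, hhE]
    · rw [hhE, mul_assoc, hec, hkey]
    · rw [hcf, ← mul_assoc, ← mul_assoc, hcf, hx, he1]
    · rw [← mul_assoc, ← mul_assoc, hcf, hx, he1, hec]
    · rw [h6, hFh]
  constructor
  · constructor
    · rintro ⟨g, h, h1, h2, h3, h4⟩
      obtain ⟨c, hc⟩ : ∃ c : S, (c : WithOne S) = (e : WithOne S) * g := by
        refine WithOne.cases_on g ⟨e, by rw [mul_one]⟩ fun b => ⟨e * b, by rw [WithOne.coe_mul]⟩
      refine ⟨c, ⟨⟨(f : WithOne S) * h, ?_⟩, ⟨g, hc.symm⟩⟩, ⟨⟨g, ?_⟩, ⟨h, ?_⟩⟩⟩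
      · rw [hc, mul_assoc, ← mul_assoc g, h4, he1]
      · rw [hc, ← h1]
      · rw [hc, ← mul_assoc, h3]
    · intro hD
      obtain ⟨g, h, a, b, c3, d, _, _⟩ := main hD
      exact ⟨g, h, a, b, c3, d⟩
  · exact main
end

section
/- In any band (a semigroup all of whose elements are idempotents), the natural conjugacy relation ∼ₙ coincides with Green's relation D. -/
namespace Band

variable {M : Type*} [Semigroup M]

theorem mul_self_mul (hband : ∀ x : M, x * x = x) (x y : M) : x * (x * y) = x * y := by
  rw [← mul_assoc, hband]

theorem mul_eq_of_mul_eq_left (hband : ∀ x : M, x * x = x) {a c x : M} (h : c * x = a) :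
    c * a = a := by
  rw [← h, mul_self_mul hband]

theorem mul_eq_of_mul_eq_right (hband : ∀ x : M, x * x = x) {a c x : M} (h : x * c = a) :
    a * c = a := by
  rw [← h, mul_assoc, hband]

theorem mul_mul_eq_left_of_mul_eq (hband : ∀ x : M, x * x = x) {a b c : M}
    (hca : c * a = a) (hcb : c * b = c) : a * b * a = a := by
  have ha : c * (b * a) = a := by rw [← mul_assoc, hcb, hca]
  calc a * b * a = c * ((b * a) * (b * a)) := by rw [← mul_assoc, ha, mul_assoc]
    _ = a := by rw [hband, ha]

theorem mul_mul_eq_right_of_mul_eq (hband : ∀ x : M, x * x = x) {a b c : M}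
    (hac : a * c = c) (hbc : b * c = b) : b * a * b = b := by
  have hb : b * a * c = b := by rw [mul_assoc, hac, hbc]
  calc b * a * b = ((b * a) * (b * a)) * c := by rw [mul_assoc, mul_assoc, hb, ← mul_assoc]
    _ = b := by rw [hband, hb]

theorem mul_mul_eq_of_conj (hband : ∀ x : M, x * x = x) {a b g h : M}
    (hbh : b * h = h * a) (hhag : h * a * g = b) (hgbh : g * b * h = a) :
    a * b * a = a := by
  have hah : a * h = a := by rw [← hgbh, mul_assoc, hband]
  have hbg : b * g = b := by rw [← hhag, mul_assoc, hband]
  have hgha : g * (h * a) = a := by rw [← hbh, ← mul_assoc, hgbh]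
  calc a * b * a = a * b * (g * (h * a)) := by rw [hgha]
    _ = a * (b * g) * (h * a) := by simp only [mul_assoc]
    _ = a * (b * h) * a := by rw [hbg]; simp only [mul_assoc]
    _ = a * (h * a) * a := by rw [hbh]
    _ = a := by rw [← mul_assoc, hah, hband, hband]

end Band

theorem WithOne.mul_self_of_band {S : Type*} [Semigroup S] (hband : ∀ x : S, x * x = x) :
    ∀ x : WithOne S, x * x = x
  | 1 => one_mul 1
  | (x : S) => by rw [← WithOne.coe_mul, hband]

theorem natConj_iff_of_band {S : Type*} [Semigroup S] (hband : ∀ x : S, x * x = x) (a b : S) :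
    NatConj a b ↔ a * b * a = a ∧ b * a * b = b := by
  have hband' := WithOne.mul_self_of_band hband
  constructor
  · rintro ⟨g, h, hag, hbh, hhag, hgbh⟩
    exact ⟨by exact_mod_cast Band.mul_mul_eq_of_conj hband' hbh hhag hgbh,
      by exact_mod_cast Band.mul_mul_eq_of_conj hband' hag hgbh hhag⟩
  · rintro ⟨haba, hbab⟩
    have haba' : (a : WithOne S) * (b * a) = a := by rw [← mul_assoc]; exact_mod_cast haba
    have hbab' : (b : WithOne S) * (a * b) = b := by rw [← mul_assoc]; exact_mod_cast hbab
    refine ⟨a * b, b * a, ?_, ?_, ?_, ?_⟩ <;>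
      simp only [mul_assoc, hband', Band.mul_self_mul hband', haba', hbab']

theorem greenD_of_mul_mul_eq {S : Type*} [Semigroup S] {a b : S}
    (haba : a * b * a = a) (hbab : b * a * b = b) : GreenD a b :=
  ⟨a * b, ⟨⟨a, by exact_mod_cast haba⟩, ⟨b, rfl⟩⟩,
    ⟨a, rfl⟩, ⟨b, by exact_mod_cast (mul_assoc b a b ▸ hbab)⟩⟩

theorem greenD_iff_of_band {S : Type*} [Semigroup S] (hband : ∀ x : S, x * x = x) (a b : S) :
    GreenD a b ↔ a * b * a = a ∧ b * a * b = b := by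
  have hband' := WithOne.mul_self_of_band hband
  refine ⟨?_, fun h => greenD_of_mul_mul_eq h.1 h.2⟩
  rintro ⟨c, ⟨⟨x, hcx⟩, ⟨y, hay⟩⟩, ⟨u, hub⟩, ⟨v, hvc⟩⟩
  have haba := Band.mul_mul_eq_left_of_mul_eq hband'
    (Band.mul_eq_of_mul_eq_left hband' hcx) (Band.mul_eq_of_mul_eq_right hband' hub)
  have hbab := Band.mul_mul_eq_right_of_mul_eq hband'
    (Band.mul_eq_of_mul_eq_left hband' hay) (Band.mul_eq_of_mul_eq_right hband' hvc)
  exact ⟨by exact_mod_cast haba, by exact_mod_cast hbab⟩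

/-- In any band, ∼ₙ = D. -/
theorem natConj_eq_greenD_of_band {S : Type*} [Semigroup S]
    (hband : ∀ x : S, x * x = x) :
    ∀ a b : S, NatConj a b ↔ GreenD a b := fun a b =>
  (natConj_iff_of_band hband a b).trans (greenD_iff_of_band hband a b).symm
end

section
/- If S is a semigroup in which the natural conjugacy ∼ₙ is the universal relation S × S and S contains an idempotent, then S is a rectangular band (i.e., every element is idempotent and xyx = x for all x, y ∈ S). -/
/-!
If `a = g b h` with `h a g = b` and `b h = h a`, then `b h g = b`, so `a² = g (b h g) b h = g b² h`;
so an element conjugate to an idempotent is idempotent. In a band, `WithOne S` is a band too,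
so `b g = h a g g = b` and `a h = a`, and then `a b a = a b (g b h) = a b h = a h a = a`.
-/

theorem WithOne.isIdempotentElem_of_forall {S : Type*} [Semigroup S]
    (hS : ∀ x : S, IsIdempotentElem x) (z : WithOne S) : IsIdempotentElem z := by
  induction z using WithOne.recOneCoe with
  | one => exact IsIdempotentElem.one
  | coe a => exact congrArg _ (hS a)

namespace NatConj

variable {S : Type*} [Semigroup S] {a b : S}

theorem isIdempotentElem (hab : NatConj a b) (hb : IsIdempotentElem b) : IsIdempotentElem a := by
  obtain ⟨g, h, -, hbh, hhag, hgbh⟩ := hab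
  have hbhg : (b : WithOne S) * h * g = b := by rw [hbh]; exact hhag
  apply WithOne.coe_injective
  calc ((a * a : S) : WithOne S) = g * b * h * (g * b * h) := by rw [WithOne.coe_mul, hgbh]
    _ = g * (b * h * g) * b * h := by simp only [mul_assoc]
    _ = g * ((b * b : S) : WithOne S) * h := by rw [hbhg, WithOne.coe_mul, mul_assoc g]
    _ = a := by rw [hb, hgbh]

theorem mul_mul_self_of_band (hS : ∀ x : S, IsIdempotentElem x) (hab : NatConj a b) :
    a * b * a = a := by
  obtain ⟨g, h, -, hbh, hhag, hgbh⟩ := hab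
  have hW := WithOne.isIdempotentElem_of_forall hS
  have hbg : (b : WithOne S) * g = b := by
    rw [← hhag, mul_assoc _ g, (hW g).eq]
  have hah : (a : WithOne S) * h = a := by
    rw [← hgbh, mul_assoc _ h, (hW h).eq]
  apply WithOne.coe_injective
  calc ((a * b * a : S) : WithOne S) = a * (b * g) * (b * h) := by
        rw [WithOne.coe_mul, WithOne.coe_mul, ← hgbh]; simp only [mul_assoc]
    _ = a * (b * b) * h := by rw [hbg]; simp only [mul_assoc]
    _ = a * (h * a) := by rw [(hW b).eq, mul_assoc, hbh]
    _ = a := by rw [← mul_assoc, hah, (hW a).eq]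

end NatConj

/-- If ∼ₙ is the universal relation on `S` and `S` has an idempotent,
then `S` is a rectangular band. -/
theorem rectangular_band_of_natConj_universal {S : Type*} [Semigroup S]
    (huniv : ∀ a b : S, NatConj a b) (hidem : ∃ e : S, e * e = e) :
    (∀ x : S, x * x = x) ∧ (∀ x y : S, x * y * x = x) := by
  obtain ⟨e, he⟩ := hidem
  have hband : ∀ x : S, IsIdempotentElem x := fun x => (huniv x e).isIdempotentElem he
  exact ⟨hband, fun x y => (huniv x y).mul_mul_self_of_band hband⟩
end

section
/- In any inverse semigroup S, the natural conjugacy ∼ₙ coincides with i-conjugacy ∼ᵢ, where a ∼ᵢ b iff there exists g ∈ S¹ with g⁻¹ag = b and gbg⁻¹ = a. -/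
open Classical in
/-- The extension of the inverse operation of `S` to `S¹ = WithOne S`, with `1⁻¹ = 1`. -/
noncomputable def winv {S : Type*} [Semigroup S] [Inv S] (x : WithOne S) : WithOne S :=
  if h : x = 1 then 1 else ((WithOne.unone h)⁻¹ : S)

/-!
In an inverse semigroup idempotents commute, and `b = x * g * b` forces `g⁻¹ * g * b = b`
(and dually). Given a natural conjugacy `a * g = g * b`, `h * a * g = b`, `g * b * h = a`, we get
`b = h * g * b` and `a = a * g * h`, hence `g⁻¹ * a * g = g⁻¹ * g * b = b` and
`g * b * g⁻¹ = a * g * g⁻¹ = a`. Conversely an i-conjugator `g` is a natural one with `h = g⁻¹`.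
All of this happens in `S¹`, which is again an inverse semigroup.
-/

structure IsInverseSemigroup (S : Type*) [Semigroup S] [Inv S] : Prop where
  mul_inv_mul : ∀ a : S, a * a⁻¹ * a = a
  inv_mul_inv : ∀ a : S, a⁻¹ * a * a⁻¹ = a⁻¹
  eq_inv_of_mul_mul : ∀ a b : S, a * b * a = a → b * a * b = b → b = a⁻¹

namespace IsInverseSemigroup

variable {S : Type*} [Semigroup S] [Inv S] (hS : IsInverseSemigroup S)
include hS

theorem inv_inv (a : S) : a⁻¹⁻¹ = a :=
  (hS.eq_inv_of_mul_mul _ _ (hS.inv_mul_inv a) (hS.mul_inv_mul a)).symm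

theorem inv_eq_self_of_isIdempotentElem {e : S} (he : IsIdempotentElem e) : e⁻¹ = e :=
  (hS.eq_inv_of_mul_mul e e (by rw [he, he]) (by rw [he, he])).symm

theorem isIdempotentElem_mul_inv (a : S) : IsIdempotentElem (a * a⁻¹) := by
  rw [IsIdempotentElem, ← mul_assoc, hS.mul_inv_mul]

theorem isIdempotentElem_inv_mul (a : S) : IsIdempotentElem (a⁻¹ * a) := by
  rw [IsIdempotentElem, mul_assoc, ← mul_assoc a, hS.mul_inv_mul]

theorem isIdempotentElem_mul {e f : S} (he : IsIdempotentElem e) (hf : IsIdempotentElem f) :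
    IsIdempotentElem (e * f) := by
  set x := (e * f)⁻¹
  have hefx : e * f * x * (e * f) = e * f := hS.mul_inv_mul _
  have hxef : x * (e * f) * x = x := hS.inv_mul_inv _
  -- `f * x * e` is another inverse of `e * f`, so it is `x`; this makes `x` idempotent.
  have hx : f * x * e = x := by
    apply hS.eq_inv_of_mul_mul
    · calc e * f * (f * x * e) * (e * f) = e * (f * f) * x * (e * e) * f := by
            simp only [mul_assoc]
        _ = e * f * x * (e * f) := by rw [he.eq, hf.eq]; simp only [mul_assoc]
        _ = e * f := hefx
    · calc f * x * e * (e * f) * (f * x * e) = f * (x * (e * e) * (f * f) * x) * e := by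
            simp only [mul_assoc]
        _ = f * x * e := by rw [he.eq, hf.eq, mul_assoc x e f, hxef]
  have hxx : IsIdempotentElem x := by
    calc x * x = f * (x * (e * f) * x) * e := by
          conv_lhs => rw [← hx]
          simp only [mul_assoc]
      _ = x := by rw [hxef, hx]
  have hef : e * f = x := by
    rw [← hS.inv_eq_self_of_isIdempotentElem hxx, hS.inv_inv]
  rwa [hef]

theorem commute_of_isIdempotentElem {e f : S} (he : IsIdempotentElem e)
    (hf : IsIdempotentElem f) : Commute e f := by
  have hef := hS.isIdempotentElem_mul he hf
  have hfe := hS.isIdempotentElem_mul hf he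
  have : f * e = (e * f)⁻¹ := by
    apply hS.eq_inv_of_mul_mul
    · calc e * f * (f * e) * (e * f) = e * (f * f) * (e * e) * f := by simp only [mul_assoc]
        _ = e * f * (e * f) := by rw [he.eq, hf.eq]; simp only [mul_assoc]
        _ = e * f := hef.eq
    · calc f * e * (e * f) * (f * e) = f * (e * e) * (f * f) * e := by simp only [mul_assoc]
        _ = f * e * (f * e) := by rw [he.eq, hf.eq]; simp only [mul_assoc]
        _ = f * e := hfe.eq
  rw [Commute, SemiconjBy, this, hS.inv_eq_self_of_isIdempotentElem hef]

theorem inv_mul_self_mul_of_eq_mul_mul {x g b : S} (h : b = x * g * b) :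
    g⁻¹ * g * b = b := by
  -- `b * b⁻¹ = y * (g⁻¹ * g)` for some `y`, so `b * b⁻¹` lies below the idempotent `g⁻¹ * g`.
  have hcomm := hS.commute_of_isIdempotentElem (hS.isIdempotentElem_inv_mul g)
    (hS.isIdempotentElem_mul_inv b)
  have hbb : b * b⁻¹ = x * g * (b * b⁻¹) * (g⁻¹ * g) :=
    calc b * b⁻¹ = x * (g * g⁻¹ * g) * b * b⁻¹ := by rw [hS.mul_inv_mul, ← h]
      _ = x * g * (g⁻¹ * g * (b * b⁻¹)) := by simp only [mul_assoc]
      _ = x * g * (b * b⁻¹) * (g⁻¹ * g) := by rw [hcomm.eq, mul_assoc (x * g)]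
  have hbbg : b * b⁻¹ * (g⁻¹ * g) = b * b⁻¹ := by
    rw [hbb, mul_assoc _ (g⁻¹ * g), (hS.isIdempotentElem_inv_mul g).eq]
  calc g⁻¹ * g * b = g⁻¹ * g * (b * b⁻¹) * b := by rw [mul_assoc _ (b * b⁻¹), hS.mul_inv_mul]
    _ = b := by rw [hcomm.eq, hbbg, hS.mul_inv_mul]

theorem mul_mul_inv_self_of_eq_mul_mul {x g a : S} (h : a = a * g * x) :
    a * g * g⁻¹ = a := by
  -- `a⁻¹ * a = (g * g⁻¹) * y` for some `y`, so `a⁻¹ * a` lies below the idempotent `g * g⁻¹`.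
  have hcomm := hS.commute_of_isIdempotentElem (hS.isIdempotentElem_mul_inv g)
    (hS.isIdempotentElem_inv_mul a)
  have haa : a⁻¹ * a = g * g⁻¹ * (a⁻¹ * a) * (g * x) :=
    calc a⁻¹ * a = a⁻¹ * (a * (g * g⁻¹ * g) * x) := by rw [hS.mul_inv_mul, ← h]
      _ = a⁻¹ * a * (g * g⁻¹) * (g * x) := by simp only [mul_assoc]
      _ = g * g⁻¹ * (a⁻¹ * a) * (g * x) := by rw [hcomm.eq]
  have hgaa : g * g⁻¹ * (a⁻¹ * a) = a⁻¹ * a := by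
    rw [haa, ← mul_assoc (g * g⁻¹), ← mul_assoc (g * g⁻¹), (hS.isIdempotentElem_mul_inv g).eq]
  calc a * g * g⁻¹ = a * (a⁻¹ * a) * (g * g⁻¹) := by rw [← mul_assoc a, hS.mul_inv_mul, mul_assoc]
    _ = a := by rw [mul_assoc, ← hcomm.eq, hgaa, ← mul_assoc, hS.mul_inv_mul]

theorem withOne : IsInverseSemigroup (WithOne S) where
  mul_inv_mul a := by
    induction a with
    | one => simp
    | coe s => rw [← WithOne.coe_inv, ← WithOne.coe_mul, ← WithOne.coe_mul, hS.mul_inv_mul]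
  inv_mul_inv a := by
    induction a with
    | one => simp
    | coe s => rw [← WithOne.coe_inv, ← WithOne.coe_mul, ← WithOne.coe_mul, hS.inv_mul_inv]
  eq_inv_of_mul_mul a b hab hba := by
    induction a with
    | one => simpa using hab
    | coe s =>
      induction b with
      | one => simp at hba
      | coe t =>
        rw [← WithOne.coe_inv, WithOne.coe_inj]
        simp only [← WithOne.coe_mul, WithOne.coe_inj] at hab hba
        exact hS.eq_inv_of_mul_mul s t hab hba

end IsInverseSemigroup

theorem winv_eq_inv {S : Type*} [Semigroup S] [Inv S] (x : WithOne S) : winv x = x⁻¹ := by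
  induction x with
  | one => simp [winv]
  | coe s => rw [winv, dif_neg WithOne.coe_ne_one, WithOne.unone_coe, WithOne.coe_inv]

/-- In an inverse semigroup (each element has a unique inverse),
natural conjugacy coincides with i-conjugacy. -/
theorem natConj_iff_iConj {S : Type*} [Semigroup S] [Inv S]
    (hinv1 : ∀ a : S, a * a⁻¹ * a = a)
    (hinv2 : ∀ a : S, a⁻¹ * a * a⁻¹ = a⁻¹)
    (huniq : ∀ a b : S, a * b * a = a → b * a * b = b → b = a⁻¹)
    (a b : S) :
    NatConj a b ↔
      ∃ g : WithOne S,
        winv g * (a : WithOne S) * g = (b : WithOne S) ∧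
        g * (b : WithOne S) * winv g = (a : WithOne S) := by
  have hS : IsInverseSemigroup (WithOne S) := IsInverseSemigroup.withOne ⟨hinv1, hinv2, huniq⟩
  simp only [winv_eq_inv]
  constructor
  · rintro ⟨g, h, hag, -, hb, ha⟩
    have hb' : (b : WithOne S) = h * g * b :=
      calc (b : WithOne S) = h * (a * g) := by rw [← hb, mul_assoc]
        _ = h * g * b := by rw [hag, mul_assoc]
    have ha' : (a : WithOne S) = a * g * h := by rw [hag, ha]
    refine ⟨g, ?_, ?_⟩
    · rw [mul_assoc, hag, ← mul_assoc]
      exact hS.inv_mul_self_mul_of_eq_mul_mul hb'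
    · rw [← hag]
      exact hS.mul_mul_inv_self_of_eq_mul_mul ha'
  · rintro ⟨g, hb, ha⟩
    have hbgg : (b : WithOne S) * (g⁻¹ * g) = b := by
      rw [← hb, mul_assoc _ g, ← mul_assoc g, hS.mul_inv_mul]
    have hagg : (a : WithOne S) * (g * g⁻¹) = a := by
      rw [← ha, mul_assoc _ g⁻¹, ← mul_assoc g⁻¹, hS.inv_mul_inv]
    refine ⟨g, g⁻¹, ?_, ?_, hb, ha⟩
    · rw [← ha, mul_assoc _ g⁻¹, mul_assoc g, hbgg]
    · rw [← hb, mul_assoc _ g, mul_assoc g⁻¹, hagg]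
end

section
/- Let S be a left stable semigroup (for all a, b ∈ S, a ∈ S¹ab implies ab ∈ S¹a) which is also right stable (dually). Then the intersection of the natural conjugacy ∼ₙ with the natural (Mitsch) partial order ≤ is the identity relation: if a ∼ₙ b and a ≤ b then a = b. -/
/-- The Mitsch natural partial order: `a ≤ b` iff `∃ s t ∈ S¹, sa = a = sb ∧ at = a = bt`. -/
def MitschLe {S : Type*} [Semigroup S] (a b : S) : Prop :=
  ∃ s t : WithOne S,
    s * (a : WithOne S) = (a : WithOne S) ∧
    s * (b : WithOne S) = (a : WithOne S) ∧
    (a : WithOne S) * t = (a : WithOne S) ∧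
    (b : WithOne S) * t = (a : WithOne S)

/-! If `a ≤ b` with witnesses `sb = a`, `at = a = bt`, then `a = b` as soon as `b ∈ S¹a`, since
`b = ca = cat = bt = a`. For a conjugacy `hag = b` we get `shag = sb = a`, i.e.
`a ∈ S¹(ag)`; left stability turns this into `ag ∈ S¹a`, hence `b = hag ∈ S¹a`. -/

def LeftStable (S : Type*) [Semigroup S] : Prop :=
  ∀ a b : S,
    (∃ x : WithOne S, x * ((a * b : S) : WithOne S) = (a : WithOne S)) →
    ∃ y : WithOne S, y * (a : WithOne S) = ((a * b : S) : WithOne S)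

section

variable {S : Type*} [Semigroup S]

theorem LeftStable.exists_mul_eq_of_exists_mul_eq {a : S} {g : WithOne S} (hS : LeftStable S)
    (h : ∃ x : WithOne S, x * ((a : WithOne S) * g) = a) :
    ∃ y : WithOne S, y * (a : WithOne S) = (a : WithOne S) * g := by
  induction g using WithOne.recOneCoe with
  | one => exact ⟨1, by rw [one_mul, mul_one]⟩
  | coe g => exact_mod_cast hS a g (by exact_mod_cast h)

theorem MitschLe.eq_of_eq_mul {a b : S} (hle : MitschLe a b) {c : WithOne S}
    (hb : (b : WithOne S) = c * a) : a = b := by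
  obtain ⟨-, t, -, -, hat, hbt⟩ := hle
  apply WithOne.coe_inj.mp
  calc (a : WithOne S) = b * t := hbt.symm
    _ = c * (a * t) := by rw [hb, mul_assoc]
    _ = b := by rw [hat, hb]

end

theorem natConj_inter_mitschLe_eq_id_of_stable_general {S : Type*} [Semigroup S]
    (hleft : ∀ a b : S,
      (∃ x : WithOne S, x * ((a * b : S) : WithOne S) = (a : WithOne S)) →
      ∃ y : WithOne S, y * (a : WithOne S) = ((a * b : S) : WithOne S))
    (a b : S) (hc : NatConj a b) (hle : MitschLe a b) : a = b := by
  obtain ⟨g, h, -, -, hhag, -⟩ := hc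
  obtain ⟨s, -, -, hsb, -, -⟩ := id hle
  have ha : s * h * ((a : WithOne S) * g) = a :=
    calc s * h * ((a : WithOne S) * g) = s * (h * a * g) := by simp only [mul_assoc]
      _ = a := by rw [hhag, hsb]
  obtain ⟨y, hy⟩ := LeftStable.exists_mul_eq_of_exists_mul_eq hleft ⟨s * h, ha⟩
  exact hle.eq_of_eq_mul (c := h * y) (by rw [← hhag, mul_assoc h, ← hy, mul_assoc])

/-- In a stable semigroup, ∼ₙ ∩ ≤ is the identity relation. -/
theorem natConj_inter_mitschLe_eq_id_of_stable {S : Type*} [Semigroup S]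
    (hleft : ∀ a b : S,
      (∃ x : WithOne S, x * ((a * b : S) : WithOne S) = (a : WithOne S)) →
      ∃ y : WithOne S, y * (a : WithOne S) = ((a * b : S) : WithOne S))
    (hright : ∀ a b : S,
      (∃ x : WithOne S, ((b * a : S) : WithOne S) * x = (a : WithOne S)) →
      ∃ y : WithOne S, (a : WithOne S) * y = ((b * a : S) : WithOne S))
    (a b : S) (hc : NatConj a b) (hle : MitschLe a b) : a = b :=
  natConj_inter_mitschLe_eq_id_of_stable_general hleft a b hc hle
end

section
/- Let S be a semigroup in which ∼ₙ ∩ ≤ is the identity relation (where ≤ is the Mitsch natural partial order). Then S does not contain a pair of elements a, b satisfying the defining relations of the bicyclic monoid (aba = a = aab, bab = b = abb) with ab ≠ ba. -/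
/-- If ∼ₙ ∩ ≤ is the identity relation on `S`, then `S` contains no pair
of elements satisfying the bicyclic relations with `ab ≠ ba`. -/
theorem no_bicyclic_of_natConj_inter_mitschLe_eq_id {S : Type*} [Semigroup S]
    (H : ∀ a b : S, NatConj a b → MitschLe a b → a = b) :
    ∀ a b : S, a * b * a = a → a * a * b = a → b * a * b = b → a * b * b = b →
      a * b = b * a := by
  intro a b h1 h2 h3 h4
  simp only [mul_assoc] at h1 h2 h3 h4
  refine (H (b * a) (a * b) ?_ ?_).symm
  · refine ⟨(b : WithOne S), (a : WithOne S), ?_, ?_, ?_, ?_⟩ <;>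
      simp only [← WithOne.coe_mul, WithOne.coe_inj, mul_assoc]
    · rw [h3]
    · rw [h1]
  · refine ⟨((b * a : S) : WithOne S), ((b * a : S) : WithOne S), ?_, ?_, ?_, ?_⟩ <;>
      simp only [← WithOne.coe_mul, WithOne.coe_inj, mul_assoc]
    · rw [h1]
    · rw [h2]
    · rw [h1]
    · rw [← mul_assoc b b a, ← mul_assoc a (b * b) a, h4]
end

section
/- Let S be a semigroup and suppose a ∼ₙ b with conjugators g, h ∈ S¹. Then for every positive integer k, aᵏ ∼ₙ bᵏ, with the same conjugators g, h witnessing the conjugacy (i.e., aᵏg = gbᵏ, bᵏh = haᵏ, haᵏg = bᵏ, gbᵏh = aᵏ). -/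
/-- If `a ∼ₙ b` with conjugators `g, h`, then for every positive integer `k`,
`aᵏ ∼ₙ bᵏ` with the same conjugators `g, h` (powers computed in `S¹ = WithOne S`). -/
theorem natConj_pow {S : Type*} [Semigroup S] (a b : S) (g h : WithOne S)
    (h1 : (a : WithOne S) * g = g * (b : WithOne S))
    (h2 : (b : WithOne S) * h = h * (a : WithOne S))
    (h3 : h * (a : WithOne S) * g = (b : WithOne S))
    (h4 : g * (b : WithOne S) * h = (a : WithOne S)) :
    ∀ k : ℕ, 0 < k →
      (a : WithOne S) ^ k * g = g * (b : WithOne S) ^ k ∧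
      (b : WithOne S) ^ k * h = h * (a : WithOne S) ^ k ∧
      h * (a : WithOne S) ^ k * g = (b : WithOne S) ^ k ∧
      g * (b : WithOne S) ^ k * h = (a : WithOne S) ^ k := by
  have hgb : h * g * (b : WithOne S) = b := by
    rw [mul_assoc, ← h1, ← mul_assoc, h3]
  have gha : g * h * (a : WithOne S) = a := by
    rw [mul_assoc, ← h2, ← mul_assoc, h4]
  have key1 : ∀ k : ℕ, (a : WithOne S) ^ k * g = g * (b : WithOne S) ^ k := by
    intro k
    induction k with
    | zero => simp
    | succ n ih =>
      rw [pow_succ, pow_succ, mul_assoc, h1, ← mul_assoc, ih, mul_assoc]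
  have key2 : ∀ k : ℕ, (b : WithOne S) ^ k * h = h * (a : WithOne S) ^ k := by
    intro k
    induction k with
    | zero => simp
    | succ n ih =>
      rw [pow_succ, pow_succ, mul_assoc, h2, ← mul_assoc, ih, mul_assoc]
  have hgbk : ∀ k : ℕ, h * g * (b : WithOne S) ^ (k+1) = (b : WithOne S) ^ (k+1) := by
    intro k
    induction k with
    | zero => simpa using hgb
    | succ n ih =>
      rw [pow_succ, ← mul_assoc, ih, ← pow_succ]
  have ghak : ∀ k : ℕ, g * h * (a : WithOne S) ^ (k+1) = (a : WithOne S) ^ (k+1) := by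
    intro k
    induction k with
    | zero => simpa using gha
    | succ n ih =>
      rw [pow_succ, ← mul_assoc, ih, ← pow_succ]
  intro k hk
  obtain ⟨n, rfl⟩ := Nat.exists_eq_add_of_lt hk
  simp only [Nat.zero_add] at *
  refine ⟨key1 _, key2 _, ?_, ?_⟩
  · rw [mul_assoc, key1, ← mul_assoc, hgbk]
  · rw [mul_assoc, key2, ← mul_assoc, ghak]
end

section
/- Let S be a semigroup in which every element is completely regular (i.e., lies in a subgroup of S, equivalently for every a there is a commuting inverse a⁻¹ with aa⁻¹a = a and aa⁻¹ = a⁻¹a). Then the natural conjugacy ∼ₙ coincides with primary conjugacy ∼ₚ, where a ∼ₚ b iff there exist u, v ∈ S¹ with a = uv and b = vu. -/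
/-- Primary conjugacy: `a ∼ₚ b` iff `a = uv` and `b = vu` for some `u, v ∈ S¹`. -/
def PrimConj {S : Type*} [Semigroup S] (a b : S) : Prop :=
  ∃ u v : WithOne S, (a : WithOne S) = u * v ∧ (b : WithOne S) = v * u

/-!
A natural conjugation `a = g b h` yields the factorisation `u = g`, `v = b h`, since
`v u = b h g = h a g = b`. Conversely, for `a = u v` and `b = v u` take `g = a⁻¹ u` and `h = v`.
The delicate identity is `h a g = v (a a⁻¹) u = b`: the element
`x = v (a a⁻¹) u` lies in `b S b`, because `a a⁻¹ = a a⁻¹ a⁻¹ a`, and satisfies `b x = b²`; the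
idempotent `b⁻¹ b` fixes `b S b`, so `x = b⁻¹ b x = b⁻¹ b² = b`.
-/

theorem NatConj.refl {S : Type*} [Semigroup S] (a : S) : NatConj a a :=
  ⟨1, 1, by simp, by simp, by simp, by simp⟩

theorem NatConj.primConj {S : Type*} [Semigroup S] {a b : S} : NatConj a b → PrimConj a b := by
  rintro ⟨g, h, -, hba, hhag, hgbh⟩
  refine ⟨g, b * h, ?_, ?_⟩
  · rw [← mul_assoc, hgbh]
  · rw [hba, hhag]

section CommutingInverse

variable {S : Type*} [Semigroup S] [Inv S]

theorem inv_mul_mul_self_of_commute (hinv : ∀ a : S, a * a⁻¹ * a = a)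
    (hcomm : ∀ a : S, a * a⁻¹ = a⁻¹ * a) (a : S) : a⁻¹ * a * a = a := by
  rw [← hcomm, hinv]

theorem mul_mul_mul_inv_of_commute (hinv : ∀ a : S, a * a⁻¹ * a = a)
    (hcomm : ∀ a : S, a * a⁻¹ = a⁻¹ * a) (a : S) : a * (a * a⁻¹) = a := by
  rw [hcomm, ← mul_assoc, hinv]

theorem mul_inv_eq_mul_inv_mul_inv_mul (hinv : ∀ a : S, a * a⁻¹ * a = a)
    (hcomm : ∀ a : S, a * a⁻¹ = a⁻¹ * a) (a : S) : a * a⁻¹ = a * (a⁻¹ * a⁻¹) * a :=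
  calc a * a⁻¹ = a * a⁻¹ * a * a⁻¹ := by rw [hinv]
    _ = a * a⁻¹ * (a⁻¹ * a) := by rw [← hcomm, mul_assoc]
    _ = a * (a⁻¹ * a⁻¹) * a := by simp only [mul_assoc]

theorem eq_of_eq_mul_mul_of_mul_eq_mul_self (hinv : ∀ a : S, a * a⁻¹ * a = a)
    (hcomm : ∀ a : S, a * a⁻¹ = a⁻¹ * a) {b x : S} (y : S)
    (hx : x = b * y * b) (hbx : b * x = b * b) : x = b :=
  calc x = b⁻¹ * b * b * y * b := by rw [inv_mul_mul_self_of_commute hinv hcomm, hx]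
    _ = b⁻¹ * (b * x) := by rw [hx]; simp only [mul_assoc]
    _ = b := by rw [hbx, ← mul_assoc, inv_mul_mul_self_of_commute hinv hcomm]

theorem mul_mul_mul_inv_mul_eq (hinv : ∀ a : S, a * a⁻¹ * a = a)
    (hcomm : ∀ a : S, a * a⁻¹ = a⁻¹ * a) (u v : S) :
    v * (u * v * (u * v)⁻¹) * u = v * u := by
  refine eq_of_eq_mul_mul_of_mul_eq_mul_self hinv hcomm
    (v * ((u * v)⁻¹ * (u * v)⁻¹) * u) ?in_bSb ?left_mul
  case in_bSb =>
    rw [mul_inv_eq_mul_inv_mul_inv_mul hinv hcomm]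
    simp only [mul_assoc]
  case left_mul =>
    calc v * u * (v * (u * v * (u * v)⁻¹) * u) = v * (u * v * (u * v * (u * v)⁻¹)) * u := by
          simp only [mul_assoc]
      _ = v * u * (v * u) := by
          rw [mul_mul_mul_inv_of_commute hinv hcomm]
          simp only [mul_assoc]

theorem natConj_mul_mul_of_commute (hinv : ∀ a : S, a * a⁻¹ * a = a)
    (hcomm : ∀ a : S, a * a⁻¹ = a⁻¹ * a) (u v : S) : NatConj (u * v) (v * u) := by
  refine ⟨↑((u * v)⁻¹ * u), ↑v, ?_, ?_, ?_, ?_⟩ <;>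
    simp only [← WithOne.coe_mul, WithOne.coe_inj]
  · rw [← mul_assoc, hcomm]
    simp only [mul_assoc]
  · exact mul_assoc v u v
  · simpa only [mul_assoc] using mul_mul_mul_inv_mul_eq hinv hcomm u v
  · calc (u * v)⁻¹ * u * (v * u) * v = (u * v)⁻¹ * (u * v) * (u * v) := by simp only [mul_assoc]
      _ = u * v := inv_mul_mul_self_of_commute hinv hcomm (u * v)

theorem PrimConj.natConj (hinv : ∀ a : S, a * a⁻¹ * a = a)
    (hcomm : ∀ a : S, a * a⁻¹ = a⁻¹ * a) {a b : S} : PrimConj a b → NatConj a b := by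
  rintro ⟨u, v, hab, hba⟩
  induction u using WithOne.recOneCoe with
  | one =>
    rw [one_mul] at hab
    rw [mul_one] at hba
    rw [WithOne.coe_inj.mp (hab.trans hba.symm)]
    exact NatConj.refl b
  | coe u =>
    induction v using WithOne.recOneCoe with
    | one =>
      rw [mul_one] at hab
      rw [one_mul] at hba
      rw [WithOne.coe_inj.mp (hab.trans hba.symm)]
      exact NatConj.refl b
    | coe v =>
      rw [← WithOne.coe_mul, WithOne.coe_inj] at hab hba
      rw [hab, hba]
      exact natConj_mul_mul_of_commute hinv hcomm u v

end CommutingInverse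

theorem natConj_iff_primConj_of_completelyRegular_general {S : Type*} [Semigroup S] [Inv S]
    (hinv1 : ∀ a : S, a * a⁻¹ * a = a)
    (hcomm : ∀ a : S, a * a⁻¹ = a⁻¹ * a) :
    ∀ a b : S, NatConj a b ↔ PrimConj a b :=
  fun _ _ => ⟨NatConj.primConj, PrimConj.natConj hinv1 hcomm⟩

/-- In a completely regular semigroup (every element has a commuting
inverse), natural conjugacy coincides with primary conjugacy. -/
theorem natConj_iff_primConj_of_completelyRegular {S : Type*} [Semigroup S] [Inv S]
    (hinv1 : ∀ a : S, a * a⁻¹ * a = a)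
    (hinv2 : ∀ a : S, a⁻¹ * a * a⁻¹ = a⁻¹)
    (hcomm : ∀ a : S, a * a⁻¹ = a⁻¹ * a) :
    ∀ a b : S, NatConj a b ↔ PrimConj a b :=
  natConj_iff_primConj_of_completelyRegular_general hinv1 hcomm
end

section
/- Let S be a completely regular semigroup. Then for all a, b ∈ S: a ∼ₙ b if and only if there exists g ∈ S¹ with ag = gb, g⁰a = a, and bg⁰ = b, where g⁰ = gg⁻¹ is the idempotent of the group H-class of g. -/
private lemma winv_coe' {S : Type*} [Semigroup S] [Inv S] (s : S) :
    winv (s : WithOne S) = ((s⁻¹ : S) : WithOne S) := by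
  rw [winv, dif_neg (WithOne.coe_ne_one)]
  rw [WithOne.unone_coe]

private lemma uniq' {S : Type*} [Semigroup S] (x y z : S)
    (h1 : x*y = y*x) (h2 : x*y*x = x) (h3 : y*x*y = y)
    (h4 : x*z = z*x) (h5 : x*z*x = x) (h6 : z*x*z = z) : y = z := by
  have A : (x*y)*(x*z) = x*z := by
    calc (x*y)*(x*z) = ((x*y)*x)*z := (mul_assoc _ _ _).symm
    _ = x*z := by rw [h2]
  have B : (x*y)*(x*z) = x*y := by
    calc (x*y)*(x*z) = (y*x)*(z*x) := by rw [h1, h4]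
    _ = y*(x*(z*x)) := mul_assoc _ _ _
    _ = y*((x*z)*x) := by rw [mul_assoc]
    _ = y*x := by rw [h5]
    _ = x*y := h1.symm
  have hfg : x*y = x*z := B.symm.trans A
  calc y = y*(x*y) := by rw [← mul_assoc, h3]
  _ = y*(x*z) := by rw [hfg]
  _ = (y*x)*z := (mul_assoc _ _ _).symm
  _ = (x*y)*z := by rw [h1]
  _ = (x*z)*z := by rw [hfg]
  _ = (z*x)*z := by rw [h4]
  _ = z := h6

private lemma backward_core' {S : Type*} [Semigroup S] [Inv S]
    (hinv1 : ∀ a : S, a * a⁻¹ * a = a)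
    (hinv2 : ∀ a : S, a⁻¹ * a * a⁻¹ = a⁻¹)
    (hcomm : ∀ a : S, a * a⁻¹ = a⁻¹ * a)
    (a b s : S)
    (h1 : a * s = s * b)
    (h2 : s * (s⁻¹ * a) = a)
    (h3 : b * (s * s⁻¹) = b) :
    b * (b*(b⁻¹*(s⁻¹*(a*a⁻¹)))) = (b*(b⁻¹*(s⁻¹*(a*a⁻¹)))) * a ∧
    (b*(b⁻¹*(s⁻¹*(a*a⁻¹)))) * a * s = b ∧
    s * b * (b*(b⁻¹*(s⁻¹*(a*a⁻¹)))) = a := by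
  have r_ca : a⁻¹*a = a*a⁻¹ := (hcomm a).symm
  have r_cb : b⁻¹*b = b*b⁻¹ := (hcomm b).symm
  have pr_as : ∀ x : S, a*(s*x) = s*(b*x) := fun x => by rw [← mul_assoc, h1, mul_assoc]
  have pr_ea : ∀ x : S, s*(s⁻¹*(a*x)) = a*x := fun x => by
    calc s*(s⁻¹*(a*x)) = (s*(s⁻¹*a))*x := by simp only [mul_assoc]
    _ = a*x := by rw [h2]
  have pr_be : ∀ x : S, b*(s*(s⁻¹*x)) = b*x := fun x => by
    calc b*(s*(s⁻¹*x)) = (b*(s*s⁻¹))*x := by simp only [mul_assoc]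
    _ = b*x := by rw [h3]
  have pr_ss : ∀ x : S, s*(s⁻¹*(s*x)) = s*x := fun x => by
    calc s*(s⁻¹*(s*x)) = (s*s⁻¹*s)*x := by simp only [mul_assoc]
    _ = s*x := by rw [hinv1]
  have pr_cs : ∀ x : S, s⁻¹*(s*x) = s*(s⁻¹*x) := fun x => by
    calc s⁻¹*(s*x) = (s⁻¹*s)*x := (mul_assoc _ _ _).symm
    _ = (s*s⁻¹)*x := by rw [← hcomm]
    _ = s*(s⁻¹*x) := mul_assoc _ _ _
  have pr_ca : ∀ x : S, a⁻¹*(a*x) = a*(a⁻¹*x) := fun x => by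
    calc a⁻¹*(a*x) = (a⁻¹*a)*x := (mul_assoc _ _ _).symm
    _ = (a*a⁻¹)*x := by rw [← hcomm]
    _ = a*(a⁻¹*x) := mul_assoc _ _ _
  have pr_cb : ∀ x : S, b⁻¹*(b*x) = b*(b⁻¹*x) := fun x => by
    calc b⁻¹*(b*x) = (b⁻¹*b)*x := (mul_assoc _ _ _).symm
    _ = (b*b⁻¹)*x := by rw [← hcomm]
    _ = b*(b⁻¹*x) := mul_assoc _ _ _
  have pr_aa : ∀ x : S, a*(a⁻¹*(a*x)) = a*x := fun x => by
    calc a*(a⁻¹*(a*x)) = (a*a⁻¹*a)*x := by simp only [mul_assoc]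
    _ = a*x := by rw [hinv1]
  have pr_aai : ∀ x : S, a⁻¹*(a*(a⁻¹*x)) = a⁻¹*x := fun x => by
    calc a⁻¹*(a*(a⁻¹*x)) = (a⁻¹*a*a⁻¹)*x := by simp only [mul_assoc]
    _ = a⁻¹*x := by rw [hinv2]
  have pr_bb : ∀ x : S, b*(b⁻¹*(b*x)) = b*x := fun x => by
    calc b*(b⁻¹*(b*x)) = (b*b⁻¹*b)*x := by simp only [mul_assoc]
    _ = b*x := by rw [hinv1]
  have pr_bbi : ∀ x : S, b⁻¹*(b*(b⁻¹*x)) = b⁻¹*x := fun x => by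
    calc b⁻¹*(b*(b⁻¹*x)) = (b⁻¹*b*b⁻¹)*x := by simp only [mul_assoc]
    _ = b⁻¹*x := by rw [hinv2]
  have r_aa : a*(a⁻¹*a) = a := by rw [← mul_assoc]; exact hinv1 a
  have r_bb : b*(b⁻¹*b) = b := by rw [← mul_assoc]; exact hinv1 b
  have r_bbi : b⁻¹*(b*b⁻¹) = b⁻¹ := by rw [← mul_assoc]; exact hinv2 b
  have pr_eainv : ∀ x : S, s*(s⁻¹*(a⁻¹*x)) = a⁻¹*x := fun x => by
    calc s*(s⁻¹*(a⁻¹*x)) = s*(s⁻¹*(a*(a⁻¹*(a⁻¹*x)))) := by rw [← pr_ca, pr_aai]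
    _ = a*(a⁻¹*(a⁻¹*x)) := pr_ea _
    _ = a⁻¹*x := by rw [← pr_ca, pr_aai]
  have pr_bie : ∀ x : S, b⁻¹*(s*(s⁻¹*x)) = b⁻¹*x := fun x => by
    calc b⁻¹*(s*(s⁻¹*x)) = b⁻¹*(b*(b⁻¹*(s*(s⁻¹*x)))) := (pr_bbi _).symm
    _ = b⁻¹*x := by rw [← pr_cb, pr_be, pr_cb, pr_bbi]
  have pr_D : ∀ x : S, s⁻¹*(a*(s*(s⁻¹*x))) = s*(s⁻¹*(b*(s⁻¹*x))) := fun x => by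
    rw [pr_as, pr_cs]
  have pr_se : ∀ x : S, s*(s*(s⁻¹*x)) = s*x := fun x => by rw [← pr_cs, pr_ss]
  have C1 : (s*(s⁻¹*b)) * (s*(s⁻¹*b⁻¹)) = (s*(s⁻¹*b⁻¹)) * (s*(s⁻¹*b)) := by
    simp only [mul_assoc]; rw [pr_be, pr_bie, r_cb]
  have C2 : (s*(s⁻¹*b)) * (s*(s⁻¹*b⁻¹)) * (s*(s⁻¹*b)) = (s*(s⁻¹*b)) := by
    simp only [mul_assoc]; rw [pr_bie, r_cb, pr_be, ← r_cb, r_bb]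
  have C3 : (s*(s⁻¹*b⁻¹)) * (s*(s⁻¹*b)) * (s*(s⁻¹*b⁻¹)) = (s*(s⁻¹*b⁻¹)) := by
    simp only [mul_assoc]; rw [pr_be, pr_bie, r_bbi]
  have C4 : (s*(s⁻¹*b)) * (s⁻¹*(a⁻¹*s)) = (s⁻¹*(a⁻¹*s)) * (s*(s⁻¹*b)) := by
    simp only [mul_assoc]; rw [← pr_D, pr_eainv, pr_se, ← h1, pr_ca]
  have C5 : (s*(s⁻¹*b)) * (s⁻¹*(a⁻¹*s)) * (s*(s⁻¹*b)) = (s*(s⁻¹*b)) := by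
    simp only [mul_assoc]; rw [pr_se, ← h1, pr_ca, ← pr_D, pr_ea, ← pr_ca, pr_aa, h1, pr_cs]
  have C6 : (s⁻¹*(a⁻¹*s)) * (s*(s⁻¹*b)) * (s⁻¹*(a⁻¹*s)) = (s⁻¹*(a⁻¹*s)) := by
    simp only [mul_assoc]; rw [← pr_D, pr_eainv, pr_ea, pr_aai]
  have star : s*(s⁻¹*b⁻¹) = s⁻¹*(a⁻¹*s) := uniq' _ _ _ C1 C2 C3 C4 C5 C6
  have pr_star : ∀ x : S, s⁻¹*(a⁻¹*(s*(s⁻¹*x))) = s*(s⁻¹*(b⁻¹*(s⁻¹*x))) := fun x => by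
    have h := congrArg (· * (s⁻¹*x)) star
    simp only [mul_assoc] at h
    exact h.symm
  refine ⟨?_, ?_, ?_⟩
  · simp only [mul_assoc]
    rw [r_aa, ← pr_cb, pr_bb, ← r_ca,
      show a⁻¹*a = a⁻¹*(s*(s⁻¹*a)) from by rw [h2], pr_star, pr_be]
  · simp only [mul_assoc]
    rw [pr_aa, h1, pr_cs, pr_bie, r_bb]
  · simp only [mul_assoc]
    rw [← pr_cb, pr_bb, ← pr_as, pr_ea, ← r_ca, r_aa]

/-- In a completely regular semigroup, `a ∼ₙ b` iff there is `g ∈ S¹` with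
`ag = gb`, `g⁰a = a`, and `bg⁰ = b`, where `g⁰ = gg⁻¹`. -/
theorem natConj_iff_single_conjugator_of_completelyRegular {S : Type*} [Semigroup S] [Inv S]
    (hinv1 : ∀ a : S, a * a⁻¹ * a = a)
    (hinv2 : ∀ a : S, a⁻¹ * a * a⁻¹ = a⁻¹)
    (hcomm : ∀ a : S, a * a⁻¹ = a⁻¹ * a) :
    ∀ a b : S, NatConj a b ↔
      ∃ g : WithOne S,
        (a : WithOne S) * g = g * (b : WithOne S) ∧
        (g * winv g) * (a : WithOne S) = (a : WithOne S) ∧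
        (b : WithOne S) * (g * winv g) = (b : WithOne S) := by
  intro a b
  constructor
  · rintro ⟨g, h, hag, hbh, hhag, hgbh⟩
    have A2 : a*(a*a⁻¹) = a := by rw [hcomm a, ← mul_assoc]; exact hinv1 a
    have B2 : b*(b*b⁻¹) = b := by rw [hcomm b, ← mul_assoc]; exact hinv1 b
    have wA1 : ((a*a⁻¹ : S) : WithOne S) * (a : WithOne S) = (a : WithOne S) := by
      rw [← WithOne.coe_mul]; exact congrArg _ (hinv1 a)
    have wA2 : (a : WithOne S) * ((a*a⁻¹ : S) : WithOne S) = (a : WithOne S) := by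
      rw [← WithOne.coe_mul]; exact congrArg _ A2
    have wB1 : ((b*b⁻¹ : S) : WithOne S) * (b : WithOne S) = (b : WithOne S) := by
      rw [← WithOne.coe_mul]; exact congrArg _ (hinv1 b)
    have wB2 : (b : WithOne S) * ((b*b⁻¹ : S) : WithOne S) = (b : WithOne S) := by
      rw [← WithOne.coe_mul]; exact congrArg _ B2
    have wpA2 : ∀ x : WithOne S, (a : WithOne S) * (((a*a⁻¹ : S) : WithOne S) * x) = (a : WithOne S) * x :=
      fun x => by rw [← mul_assoc, wA2]
    obtain ⟨c, hc⟩ : ∃ c : S,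
        ((a*a⁻¹ : S) : WithOne S) * g * ((b*b⁻¹ : S) : WithOne S) = (c : WithOne S) := by
      rcases eq_or_ne g 1 with hg | hg
      · exact ⟨(a*a⁻¹)*(b*b⁻¹), by rw [hg, mul_one, ← WithOne.coe_mul]⟩
      · obtain ⟨t, ht⟩ := WithOne.ne_one_iff_exists.mp hg
        exact ⟨(a*a⁻¹)*t*(b*b⁻¹), by rw [← ht, ← WithOne.coe_mul, ← WithOne.coe_mul]⟩
    have hwc : winv ((c : S) : WithOne S) = ((c⁻¹ : S) : WithOne S) := winv_coe' c
    have hEc : ((c*c⁻¹ : S) : WithOne S) * (c : WithOne S) = (c : WithOne S) := by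
      rw [← WithOne.coe_mul]; exact congrArg _ (hinv1 c)
    have hcE : (c : WithOne S) * ((c*c⁻¹ : S) : WithOne S) = (c : WithOne S) := by
      rw [← WithOne.coe_mul]
      exact congrArg _ (by rw [hcomm c, ← mul_assoc]; exact hinv1 c)
    have hGbh : (c : WithOne S) * ((b : WithOne S) * h) = (a : WithOne S) := by
      rw [← hc]
      simp only [← mul_assoc]
      rw [mul_assoc (((a*a⁻¹ : S) : WithOne S) * g) ((b*b⁻¹ : S) : WithOne S) (b : WithOne S), wB1,
        mul_assoc ((a*a⁻¹ : S) : WithOne S) g (b : WithOne S), ← hag, ← mul_assoc, wA1, hag]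
      exact hgbh
    have hhaG : (h * (a : WithOne S)) * (c : WithOne S) = (b : WithOne S) := by
      rw [← hc]
      simp only [← mul_assoc]
      rw [mul_assoc h (a : WithOne S) ((a*a⁻¹ : S) : WithOne S), wA2, hhag]
      exact wB2
    refine ⟨(c : WithOne S), ?_, ?_, ?_⟩
    · rw [← hc]
      simp only [mul_assoc]
      rw [wB1, wpA2, ← mul_assoc, hag, mul_assoc, wB2, ← hag, ← mul_assoc, wA1]
    · calc ((c : WithOne S) * winv (c : WithOne S)) * (a : WithOne S)
          = ((c*c⁻¹ : S) : WithOne S) * (a : WithOne S) := by rw [hwc, ← WithOne.coe_mul]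
      _ = ((c*c⁻¹ : S) : WithOne S) * ((c : WithOne S) * ((b : WithOne S) * h)) := by
            rw [hGbh]
      _ = (((c*c⁻¹ : S) : WithOne S) * (c : WithOne S)) * ((b : WithOne S) * h) :=
            (mul_assoc _ _ _).symm
      _ = (c : WithOne S) * ((b : WithOne S) * h) := by rw [hEc]
      _ = (a : WithOne S) := hGbh
    · calc (b : WithOne S) * ((c : WithOne S) * winv (c : WithOne S))
          = (b : WithOne S) * ((c*c⁻¹ : S) : WithOne S) := by rw [hwc, ← WithOne.coe_mul]
      _ = ((h * (a : WithOne S)) * (c : WithOne S)) * ((c*c⁻¹ : S) : WithOne S) := by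
            rw [hhaG]
      _ = (h * (a : WithOne S)) * ((c : WithOne S) * ((c*c⁻¹ : S) : WithOne S)) :=
            mul_assoc _ _ _
      _ = (h * (a : WithOne S)) * (c : WithOne S) := by rw [hcE]
      _ = (b : WithOne S) := hhaG
  · rintro ⟨g, hag, hea, hbe⟩
    rcases eq_or_ne g 1 with hg | hg
    · subst hg
      rw [mul_one, one_mul] at hag
      have hab : a = b := WithOne.coe_inj.mp hag
      subst hab
      exact ⟨1, 1, by simp⟩
    · obtain ⟨s, hs⟩ := WithOne.ne_one_iff_exists.mp hg
      rw [← hs] at hag hea hbe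
      rw [winv_coe' s] at hea hbe
      have h1 : a * s = s * b := by exact_mod_cast hag
      have h2 : s * (s⁻¹ * a) = a := by
        rw [← mul_assoc]; exact_mod_cast hea
      have h3 : b * (s * s⁻¹) = b := by exact_mod_cast hbe
      obtain ⟨N2, N3, N4⟩ := backward_core' hinv1 hinv2 hcomm a b s h1 h2 h3
      refine ⟨(s : WithOne S), ((b*(b⁻¹*(s⁻¹*(a*a⁻¹))) : S) : WithOne S), ?_, ?_, ?_, ?_⟩
      · exact hag
      · exact_mod_cast N2
      · exact_mod_cast N3
      · exact_mod_cast N4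
end

section
/- The relation ∼𝓌 on a semigroup S, defined by a ∼𝓌 b iff there exist g, h ∈ S¹ and a positive integer m with ag = gb, bh = ha, gh = aᵐ, and hg = bᵐ, is an equivalence relation. -/
/-- The relation ∼𝓌: `a ∼𝓌 b` iff there are `g, h ∈ S¹` and `m ∈ ℤ⁺` with
`ag = gb`, `bh = ha`, `gh = aᵐ`, `hg = bᵐ` (powers computed in `S¹`). -/
def WConj {S : Type*} [Semigroup S] (a b : S) : Prop :=
  ∃ (g h : WithOne S) (m : ℕ), 0 < m ∧
    (a : WithOne S) * g = g * (b : WithOne S) ∧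
    (b : WithOne S) * h = h * (a : WithOne S) ∧
    g * h = (a : WithOne S) ^ m ∧
    h * g = (b : WithOne S) ^ m

lemma pow_semiconj {M : Type*} [Monoid M] {a b g : M} (h : a * g = g * b) :
    ∀ n : ℕ, a ^ n * g = g * b ^ n := by
  intro n
  exact (SemiconjBy.pow_right h.symm n).symm

/-- ∼𝓌 is an equivalence relation on any semigroup. -/
theorem wConj_equivalence (S : Type*) [Semigroup S] :
    Equivalence (fun a b : S => WConj a b) := by
  constructor
  · intro a
    exact ⟨a, a, 2, by norm_num, rfl, rfl, (sq _).symm, (sq _).symm⟩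
  · rintro a b ⟨g, h, m, hm, h1, h2, h3, h4⟩
    exact ⟨h, g, m, hm, h2, h1, h4, h3⟩
  · rintro a b c ⟨g, h, m, hm, h1, h2, h3, h4⟩ ⟨k, l, n, hn, k1, k2, k3, k4⟩
    refine ⟨g * k, l * h, m + n, by omega, ?_, ?_, ?_, ?_⟩
    · rw [← mul_assoc, h1, mul_assoc, k1, mul_assoc]
    · rw [← mul_assoc, k2, mul_assoc, h2, mul_assoc]
    · calc g * k * (l * h) = g * (k * l) * h := by simp [mul_assoc]
        _ = g * (b : WithOne S) ^ n * h := by rw [k3]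
        _ = (a : WithOne S) ^ n * g * h := by rw [← pow_semiconj h1]
        _ = (a : WithOne S) ^ n * (a : WithOne S) ^ m := by rw [mul_assoc, h3]
        _ = (a : WithOne S) ^ (m + n) := by rw [← pow_add, Nat.add_comm]
    · calc l * h * (g * k) = l * (h * g) * k := by simp [mul_assoc]
        _ = l * (b : WithOne S) ^ m * k := by rw [h4]
        _ = l * (k * (c : WithOne S) ^ m) := by rw [mul_assoc, pow_semiconj k1]
        _ = (c : WithOne S) ^ n * (c : WithOne S) ^ m := by rw [← mul_assoc, k4]
        _ = (c : WithOne S) ^ (m + n) := by rw [← pow_add, Nat.add_comm]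
end

section
/- Let S be a semigroup in which ∼𝓌 is the universal relation S × S. Then every subgroup of S is trivial; more precisely, if e ∈ S is idempotent and a lies in the H-class of e, then a = e. -/
/-- Green's H relation. -/
def GreenH {S : Type*} [Semigroup S] (a b : S) : Prop :=
  GreenL a b ∧ GreenR a b

private lemma aux_e_pow {M : Type*} [Monoid M] (E A : M) (hEA : E * A = A) :
    ∀ n : ℕ, E * A ^ (n + 1) = A ^ (n + 1) := by
  intro n
  induction n with
  | zero => simpa using hEA
  | succ k ih =>
      rw [pow_succ, ← mul_assoc, ih, ← pow_succ]

private lemma aux_cancel {M : Type*} [Monoid M] (y E A : M) (hy : y * A = E)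
    (hEA : E * A = A) : ∀ n : ℕ, y ^ (n + 1) * A ^ (n + 1) = E := by
  intro n
  induction n with
  | zero => simpa using hy
  | succ k ih =>
      calc y ^ (k + 2) * A ^ (k + 2)
          = y ^ (k + 1) * ((y * A) * A ^ (k + 1)) := by
            rw [pow_succ, pow_succ' A (k+1), mul_assoc, ← mul_assoc y A]
        _ = y ^ (k + 1) * A ^ (k + 1) := by rw [hy, aux_e_pow E A hEA]
        _ = E := ih

/-- If ∼𝓌 is universal on `S`, then every subgroup of `S` is trivial:
if `e` is idempotent and `a` is in the H-class of `e`, then `a = e`. -/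
theorem subgroups_trivial_of_wConj_universal {S : Type*} [Semigroup S]
    (huniv : ∀ a b : S, WConj a b) :
    ∀ e a : S, e * e = e → GreenH a e → a = e := by
  intro e a he hH
  obtain ⟨⟨_, ⟨y, hy⟩⟩, ⟨⟨x2, hx2⟩, _⟩⟩ := hH
  obtain ⟨g, h, m, hm, h1, h2, h3, h4⟩ := huniv e a
  set E : WithOne S := (e : WithOne S) with hE
  set A : WithOne S := (a : WithOne S) with hA
  have hEE : E * E = E := by
    rw [hE, ← WithOne.coe_mul, he]
  have hEA : E * A = A := by
    calc E * A = E * (E * x2) := by rw [hx2]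
      _ = (E * E) * x2 := by rw [mul_assoc]
      _ = E * x2 := by rw [hEE]
      _ = A := hx2
  -- key: (E*g)*A = E*g
  have key1 : (E * g) * A = E * g := by
    calc (E * g) * A = E * (g * A) := by rw [mul_assoc]
      _ = E * (E * g) := by rw [← h1]
      _ = (E * E) * g := by rw [mul_assoc]
      _ = E * g := by rw [hEE]
  have key2 : A ^ (m + 1) = h * (E * g) := by
    calc A ^ (m + 1) = A * A ^ m := by rw [pow_succ']
      _ = A * (h * g) := by rw [h4]
      _ = (A * h) * g := by rw [mul_assoc]
      _ = (h * E) * g := by rw [h2]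
      _ = h * (E * g) := by rw [mul_assoc]
  have key3 : A ^ (m + 2) = A ^ (m + 1) := by
    calc A ^ (m + 2) = A ^ (m + 1) * A := by rw [pow_succ]
      _ = (h * (E * g)) * A := by rw [key2]
      _ = h * ((E * g) * A) := by rw [mul_assoc]
      _ = h * (E * g) := by rw [key1]
      _ = A ^ (m + 1) := key2.symm
  have hfin : A = E := by
    have hc := aux_cancel y E A hy hEA m
    calc A = E * A := hEA.symm
      _ = (y ^ (m + 1) * A ^ (m + 1)) * A := by rw [hc]
      _ = y ^ (m + 1) * (A ^ (m + 1) * A) := by rw [mul_assoc]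
      _ = y ^ (m + 1) * A ^ (m + 2) := by rw [← pow_succ]
      _ = y ^ (m + 1) * A ^ (m + 1) := by rw [key3]
      _ = E := hc
  exact WithOne.coe_inj.mp hfin
end

section
/- For a semigroup S and fixed g, h ∈ S¹, the set D_{g,h} = { a ∈ S : gh·a = a·gh = a } is a subsemigroup of S, and the mapping φ_{g,h} : D_{g,h} → S given by a ↦ hag is a semigroup homomorphism from D_{g,h} into D_{h,g} that is inverse to φ_{h,g}; in particular φ_{g,h} is an isomorphism from D_{g,h} onto D_{h,g}. -/
/-!
Inside the monoid `S¹`, the element `e = gh` is a two-sided identity for every `a ∈ D_{g,h}`, so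
the conjugation `a ↦ hag` can be computed by plain reassociation: `g(hag)h = (gh)a(gh) = a`,
`(hg)(hag) = h(gh)ag = hag`, and `h(ab)g = ha(gh)bg = (hag)(hbg)`. The only point specific to
`S¹` is that `hag` lies again in `S`, because `S` is an ideal of `S¹`.
-/

/-- Membership of `a ∈ S` in `D_{g,h} = { a ∈ S : gh·a = a·gh = a }`. -/
def MemD {S : Type*} [Semigroup S] (g h : WithOne S) (a : S) : Prop :=
  g * h * (a : WithOne S) = (a : WithOne S) ∧
  (a : WithOne S) * (g * h) = (a : WithOne S)

section Semigroup

variable {M : Type*} [Semigroup M] {g h a b : M}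

theorem conj_mul_eq_mul_conj (hb : g * h * b = b) :
    h * (a * b) * g = h * a * g * (h * b * g) :=
  calc h * (a * b) * g = h * (a * (g * h * b)) * g := by rw [hb]
    _ = h * a * g * (h * b * g) := by simp only [mul_assoc]

theorem conj_conj_eq_self (ha₁ : g * h * a = a) (ha₂ : a * (g * h) = a) :
    g * (h * a * g) * h = a :=
  calc g * (h * a * g) * h = g * h * (a * (g * h)) := by simp only [mul_assoc]
    _ = a := by rw [ha₂, ha₁]

theorem mul_conj_eq_conj (ha : g * h * a = a) : h * g * (h * a * g) = h * a * g :=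
  calc h * g * (h * a * g) = h * (g * h * a) * g := by simp only [mul_assoc]
    _ = h * a * g := by rw [ha]

theorem conj_mul_eq_conj (ha : a * (g * h) = a) : h * a * g * (h * g) = h * a * g :=
  calc h * a * g * (h * g) = h * (a * (g * h)) * g := by simp only [mul_assoc]
    _ = h * a * g := by rw [ha]

end Semigroup

namespace WithOne

theorem exists_coe_eq_mul_coe_mul {S : Type*} [Semigroup S] (x y : WithOne S) (a : S) :
    ∃ b : S, (b : WithOne S) = x * a * y := by
  induction x using WithOne.recOneCoe <;> induction y using WithOne.recOneCoe
  case one.one => exact ⟨a, by simp⟩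
  case one.coe y => exact ⟨a * y, by simp⟩
  case coe.one x => exact ⟨x * a, by simp⟩
  case coe.coe x y => exact ⟨x * a * y, by simp [mul_assoc]⟩

end WithOne

namespace MemD

variable {S : Type*} [Semigroup S] {g h : WithOne S} {a b : S}

theorem mul (ha : MemD g h a) (hb : MemD g h b) : MemD g h (a * b) := by
  constructor
  · rw [WithOne.coe_mul, ← mul_assoc, ha.1]
  · rw [WithOne.coe_mul, mul_assoc, hb.2]

theorem exists_conj (ha : MemD g h a) :
    ∃ b : S, (b : WithOne S) = h * a * g ∧ MemD h g b := by
  obtain ⟨b, hb⟩ := WithOne.exists_coe_eq_mul_coe_mul h g a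
  exact ⟨b, hb, by rw [hb]; exact mul_conj_eq_conj ha.1, by rw [hb]; exact conj_mul_eq_conj ha.2⟩

end MemD

/-- `D_{g,h}` is a subsemigroup of `S`, and the map
`φ_{g,h} : a ↦ hag` is a homomorphism from `D_{g,h}` into `D_{h,g}` which is
mutually inverse with `φ_{h,g}`; hence it is an isomorphism onto `D_{h,g}`. -/
theorem phi_partial_isomorphism {S : Type*} [Semigroup S] (g h : WithOne S) :
    -- D_{g,h} is a subsemigroup
    (∀ a b : S, MemD g h a → MemD g h b → MemD g h (a * b)) ∧
    -- φ_{g,h} maps D_{g,h} into D_{h,g}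
    (∀ a : S, MemD g h a →
      ∃ b : S, (b : WithOne S) = h * (a : WithOne S) * g ∧ MemD h g b) ∧
    -- φ_{g,h} is a homomorphism
    (∀ a b : S, MemD g h a → MemD g h b →
      h * ((a * b : S) : WithOne S) * g =
        (h * (a : WithOne S) * g) * (h * (b : WithOne S) * g)) ∧
    -- φ_{h,g} ∘ φ_{g,h} is the identity on D_{g,h}
    (∀ a : S, MemD g h a →
      g * (h * (a : WithOne S) * g) * h = (a : WithOne S)) ∧
    -- φ_{g,h} ∘ φ_{h,g} is the identity on D_{h,g}
    (∀ b : S, MemD h g b →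
      h * (g * (b : WithOne S) * h) * g = (b : WithOne S)) :=
  ⟨fun _ _ ha hb => ha.mul hb,
    fun _ ha => ha.exists_conj,
    fun _ _ _ hb => by rw [WithOne.coe_mul]; exact conj_mul_eq_mul_conj hb.1,
    fun _ ha => conj_conj_eq_self ha.1 ha.2,
    fun _ hb => conj_conj_eq_self hb.1 hb.2⟩
end
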